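/- arXiv:0811.3779 — 3 statements merged into one kernel-verified Lean document; each statement's English description precedes it below -/
import Mathlib

section
/- Let G=(V,E) be a finite simple undirected graph and let S ⊆ V be a set of vertices with μ(S) > 0. Let S₁ be obtained from S by one step of the evolving set process with uniform threshold U. Then the conditional expectation of μ(S₁) given U ≤ 1/2 equals μ(S) + ∂(S) = μ(S)(1 + φ(S)), and the conditional expectation of μ(S₁) given U > 1/2 equals μ(S) − ∂(S) = μ(S)(1 − φ(S)). -/
/-!
A vertex `y` enters `S₁` exactly when `U ≤ p(y,S)`, so over a window of thresholds `[a,b]` it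
contributes `d(y)` times the length of `[a,b] ∩ (-∞, p(y,S)]`. Laziness gives
`p(y,S) = 1/2 + e(y,S)/(2d(y)) ∈ [1/2,1]` for `y ∈ S` and `p(y,S) = e(y,S)/(2d(y)) ∈ [0,1/2]`
for `y ∉ S`. Hence on `[0,1/2]` the vertices of `S` contribute `μ(S)/2` and the others
`e(Sᶜ,S)/2 = ∂(S)/2`, while on `[1/2,1]` only the vertices of `S` contribute, in total
`e(S,S)/2 = (μ(S) - ∂(S))/2`.
-/

open scoped Classical symmDiff

noncomputable section

variable {V : Type*} [Fintype V] [DecidableEq V]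

/-- The volume `μ(S)` of a set of vertices: the sum of the degrees. -/
def vol (G : SimpleGraph V) [DecidableRel G.Adj] (S : Finset V) : ℝ :=
  ∑ x ∈ S, (G.degree x : ℝ)

/-- The number of edges leaving `S`, i.e. `∂(S) = e(S, Sᶜ)`. -/
def bdry (G : SimpleGraph V) [DecidableRel G.Adj] (S : Finset V) : ℝ :=
  ∑ x ∈ S, ((Sᶜ.filter (G.Adj x)).card : ℝ)

/-- The conductance `φ(S) = ∂(S)/μ(S)`. -/
def phiCond (G : SimpleGraph V) [DecidableRel G.Adj] (S : Finset V) : ℝ :=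
  bdry G S / vol G S

/-- The lazy random walk kernel `p(x,y)`: `1/2` if `x = y`, `1/(2 d(x))` if `x ~ y`,
and `0` otherwise. -/
def walkP (G : SimpleGraph V) [DecidableRel G.Adj] (x y : V) : ℝ :=
  if x = y then 1/2 else if G.Adj x y then 1 / (2 * (G.degree x : ℝ)) else 0

/-- `p(x,S) = Σ_{y∈S} p(x,y)`. -/
def pset (G : SimpleGraph V) [DecidableRel G.Adj] (x : V) (S : Finset V) : ℝ :=
  ∑ y ∈ S, walkP G x y

/-- One step of the evolving set process from `S` with threshold `u`:
`S₁ = {y : p(y,S) ≥ u}`. -/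
def esStep (G : SimpleGraph V) [DecidableRel G.Adj] (S : Finset V) (u : ℝ) : Finset V :=
  Finset.univ.filter fun y => u ≤ pset G y S

/-- The ESP transition kernel `K(S,S')`: the probability, for a uniform threshold
`U ∈ [0,1]`, that `{y : p(y,S) ≥ U} = S'`. -/
def Kk (G : SimpleGraph V) [DecidableRel G.Adj] (S S' : Finset V) : ℝ :=
  (MeasureTheory.volume {u : ℝ | u ∈ Set.Icc (0:ℝ) 1 ∧ esStep G S u = S'}).toReal

/-- The volume-biased ESP transition kernel `K̂(S,S') = (μ(S')/μ(S)) K(S,S')`. -/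
def Khat (G : SimpleGraph V) [DecidableRel G.Adj] (S S' : Finset V) : ℝ :=
  vol G S' / vol G S * Kk G S S'

open Finset MeasureTheory

lemma intervalIntegrable_indicator_Iic_const (a b c d : ℝ) :
    IntervalIntegrable ((Set.Iic c).indicator fun _ => d) volume a b :=
  (intervalIntegrable_const (c := d)).mono_fun
    (aestronglyMeasurable_const.indicator measurableSet_Iic)
    (Filter.Eventually.of_forall fun u => by
      simp only [Set.indicator_apply]; split_ifs <;> simp)

lemma integral_indicator_Iic_const {a b : ℝ} (hab : a ≤ b) (c d : ℝ) :
    ∫ u in a..b, (Set.Iic c).indicator (fun _ => d) u = d * max (min b c - a) 0 := by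
  rw [intervalIntegral.integral_of_le hab, integral_indicator measurableSet_Iic,
    Measure.restrict_restrict measurableSet_Iic, Set.inter_comm, Set.Ioc_inter_Iic,
    setIntegral_const, Real.volume_real_Ioc, smul_eq_mul, mul_comm]

section Graph

variable (G : SimpleGraph V) [DecidableRel G.Adj] (S : Finset V)

lemma vol_esStep (u : ℝ) :
    vol G (esStep G S u) =
      ∑ x, (Set.Iic (pset G x S)).indicator (fun _ => (G.degree x : ℝ)) u := by
  simp only [vol, esStep, sum_filter, Set.indicator_apply, Set.mem_Iic]

lemma integral_vol_esStep {a b : ℝ} (hab : a ≤ b) :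
    ∫ u in a..b, vol G (esStep G S u) = ∑ x, G.degree x * max (min b (pset G x S) - a) 0 := by
  simp only [vol_esStep]
  rw [intervalIntegral.integral_finsetSum fun x _ => intervalIntegrable_indicator_Iic_const ..]
  exact sum_congr rfl fun x _ => integral_indicator_Iic_const hab ..

omit [DecidableEq V] in
lemma card_filter_adj_le_degree (x : V) : #(S.filter (G.Adj x)) ≤ G.degree x := by
  rw [← G.card_neighborFinset_eq_degree]
  exact card_le_card fun y => by simp

lemma card_filter_adj_add_card_filter_adj_compl (x : V) :
    #(S.filter (G.Adj x)) + #(Sᶜ.filter (G.Adj x)) = G.degree x := by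
  rw [← card_union_of_disjoint (disjoint_filter_filter disjoint_compl_right), ← filter_union,
    union_compl, ← G.card_neighborFinset_eq_degree, G.neighborFinset_eq_filter]

lemma sum_compl_card_filter_adj : ∑ x ∈ Sᶜ, (#(S.filter (G.Adj x)) : ℝ) = bdry G S := by
  have := sum_card_bipartiteAbove_eq_sum_card_bipartiteBelow (s := Sᶜ) (t := S) (r := G.Adj)
  simp only [bipartiteAbove, bipartiteBelow, G.adj_comm _] at this
  rw [bdry]
  exact_mod_cast this

lemma walkP_eq (x y : V) :
    walkP G x y =
      (if x = y then 1 / 2 else 0) + if G.Adj x y then 1 / (2 * (G.degree x : ℝ)) else 0 := by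
  unfold walkP
  split_ifs <;> simp_all

lemma pset_eq (x : V) :
    pset G x S = (if x ∈ S then 1 / 2 else 0) + #(S.filter (G.Adj x)) / (2 * G.degree x) := by
  simp only [pset, walkP_eq, sum_add_distrib, sum_ite_eq, ← sum_filter, sum_const, nsmul_eq_mul]
  ring

omit [DecidableEq V] in
lemma card_filter_adj_div_le_half (x : V) :
    (#(S.filter (G.Adj x)) : ℝ) / (2 * G.degree x) ≤ 1 / 2 := by
  have h : (#(S.filter (G.Adj x)) : ℝ) ≤ G.degree x := by
    exact_mod_cast card_filter_adj_le_degree G S x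
  exact div_le_of_le_mul₀ (by positivity) (by norm_num) (by linarith)

omit [DecidableEq V] in
lemma degree_mul_card_filter_adj_div (x : V) :
    G.degree x * ((#(S.filter (G.Adj x)) : ℝ) / (2 * G.degree x)) =
      #(S.filter (G.Adj x)) / 2 := by
  rcases eq_or_ne (G.degree x) 0 with h | h
  · have := card_filter_adj_le_degree G S x
    simp_all
  · field_simp

lemma integral_vol_esStep_zero_half :
    ∫ u in (0 : ℝ)..(1 / 2), vol G (esStep G S u) = (vol G S + bdry G S) / 2 := by
  have h_mem : ∀ x ∈ S,
      G.degree x * max (min (1 / 2) (pset G x S) - 0) 0 = (G.degree x : ℝ) / 2 := by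
    intro x hx
    rw [pset_eq, if_pos hx, min_eq_left (le_add_of_nonneg_right (by positivity)), sub_zero,
      max_eq_left (by norm_num)]
    ring
  have h_compl : ∀ x ∈ Sᶜ,
      G.degree x * max (min (1 / 2) (pset G x S) - 0) 0 = (#(S.filter (G.Adj x)) : ℝ) / 2 := by
    intro x hx
    rw [pset_eq, if_neg (mem_compl.1 hx), zero_add, min_eq_right (card_filter_adj_div_le_half ..),
      sub_zero, max_eq_left (by positivity), degree_mul_card_filter_adj_div]
  rw [integral_vol_esStep G S (by norm_num), ← sum_add_sum_compl S, sum_congr rfl h_mem,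
    sum_congr rfl h_compl, ← sum_div, ← sum_div, sum_compl_card_filter_adj, vol, add_div]

lemma integral_vol_esStep_half_one :
    ∫ u in (1 / 2 : ℝ)..1, vol G (esStep G S u) = (vol G S - bdry G S) / 2 := by
  have h_mem : ∀ x ∈ S,
      G.degree x * max (min 1 (pset G x S) - 1 / 2) 0 = (#(S.filter (G.Adj x)) : ℝ) / 2 := by
    intro x hx
    have := card_filter_adj_div_le_half G S x
    rw [pset_eq, if_pos hx, min_eq_right (by linarith), add_sub_cancel_left,
      max_eq_left (by positivity), degree_mul_card_filter_adj_div]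
  have h_compl : ∀ x ∈ Sᶜ, G.degree x * max (min 1 (pset G x S) - 1 / 2) 0 = (0 : ℝ) := by
    intro x hx
    have := card_filter_adj_div_le_half G S x
    rw [pset_eq, if_neg (mem_compl.1 hx), zero_add, min_eq_right (by linarith),
      max_eq_right (by linarith), mul_zero]
  have h_split : ∀ x ∈ S,
      (#(S.filter (G.Adj x)) : ℝ) = G.degree x - #(Sᶜ.filter (G.Adj x)) := fun x _ => by
    rw [eq_sub_iff_add_eq]
    exact_mod_cast card_filter_adj_add_card_filter_adj_compl G S x
  rw [integral_vol_esStep G S (by norm_num), ← sum_add_sum_compl S, sum_congr rfl h_mem,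
    sum_congr rfl h_compl, sum_const_zero, add_zero, ← sum_div, sum_congr rfl h_split,
    sum_sub_distrib, vol, bdry]

end Graph

/-- Proposition 1: for a set `S` with `μ(S) > 0`, in one step of the evolving set
process with uniform threshold `U`, `E[μ(S₁) | U ≤ 1/2] = μ(S) + ∂(S) = μ(S)(1 + φ(S))`
and `E[μ(S₁) | U > 1/2] = μ(S) − ∂(S) = μ(S)(1 − φ(S))`. -/
theorem statement0 (G : SimpleGraph V) [DecidableRel G.Adj]
    (S : Finset V) (hS : 0 < vol G S) :
    (∫ u in (0:ℝ)..(1/2), vol G (esStep G S u)) / (1/2) = vol G S + bdry G S ∧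
    (∫ u in (0:ℝ)..(1/2), vol G (esStep G S u)) / (1/2) = vol G S * (1 + phiCond G S) ∧
    (∫ u in (1/2:ℝ)..1, vol G (esStep G S u)) / (1/2) = vol G S - bdry G S ∧
    (∫ u in (1/2:ℝ)..1, vol G (esStep G S u)) / (1/2) = vol G S * (1 - phiCond G S) := by
  have h_vol_phi : vol G S * phiCond G S = bdry G S := mul_div_cancel₀ _ hS.ne'
  rw [integral_vol_esStep_zero_half, integral_vol_esStep_half_one, mul_add, mul_sub, mul_one,
    h_vol_phi]
  refine ⟨?_, ?_, ?_, ?_⟩ <;> ring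
end
end

section
/- Let G=(V,E) be a finite simple undirected graph and x ∈ V a vertex. Let (X_t, S_t) be the Diaconis–Fill coupling Markov chain started from (x, {x}). Then the marginal sequence (X_t) is a Markov chain started from x with the lazy random walk transition kernel p(·,·). -/
open scoped Classical symmDiff

noncomputable section

variable {V : Type*} [Fintype V] [DecidableEq V]

/-- The Diaconis–Fill coupling transition kernel on `V × 2^V`:
`K*((y,S),(y',S')) = p(y,y') · K(S,S')·1(y'∈S') / P(y' ∈ S₁ | S₀ = S)`. -/
def Kstar (G : SimpleGraph V) [DecidableRel G.Adj] (a b : V × Finset V) : ℝ :=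
  walkP G a.1 b.1 *
    (if b.1 ∈ b.2 then
      Kk G a.2 b.2 / (∑ S'' : Finset V, if b.1 ∈ S'' then Kk G a.2 S'' else 0)
     else 0)

/-! The set coordinate of a path of the coupling can be summed out one step at a time, from the
first step on. From a state `(y, S)` with `y ∈ S` the coupling moves the walker by `p(y, y')` and
then draws `S'` from `K(S, ·)` conditioned on `y' ∈ S'`, so summing over `S'` leaves exactly
`p(y, y')`, as long as the conditioning event has positive probability. It does: `p(y, y') > 0`
forces `p(y', S) ≥ p(y', y) > 0`, and every threshold `U ∈ (0, p(y', S)]` puts `y'` into `S₁`.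
Since the coupling only visits states with `y ∈ S`, induction on the length of the path gives the
random walk path weights. -/

section PathMarginal

variable {α β R : Type*} [Fintype β] [CommSemiring R]

theorem sum_ite_apply_zero_eq_sum_cons [DecidableEq β] {n : ℕ} (b : β)
    (f : (Fin (n + 1) → β) → R) :
    (∑ w : Fin (n + 1) → β, if w 0 = b then f w else 0) =
      ∑ w : Fin n → β, f (Fin.cons b w) := by
  rw [← (Fin.consEquiv fun _ => β).sum_comp]
  simp [Fin.consEquiv, Fintype.sum_prod_type]

theorem sum_prod_cons_eq_prod_of_sum_snd_eq (Q : α × β → α × β → R) (P : α → α → R)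
    (I : α → β → Prop) (hsum : ∀ a b a', I a b → ∑ b', Q (a, b) (a', b') = P a a')
    (hzero : ∀ p a' b', ¬ I a' b' → Q p (a', b') = 0) :
    ∀ {t : ℕ} (v : Fin (t + 1) → α) (b : β), I (v 0) b →
      ∑ w : Fin t → β, ∏ j : Fin t,
        Q (v j.castSucc, (Fin.cons b w : Fin (t + 1) → β) j.castSucc)
          (v j.succ, (Fin.cons b w : Fin (t + 1) → β) j.succ) =
      ∏ j : Fin t, P (v j.castSucc) (v j.succ)
  | 0, _, _, _ => by simp
  | t + 1, v, b, hb => by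
    have htail : ∀ b', Q (v 0, b) (v 1, b') *
        ∑ w : Fin t → β, ∏ j : Fin t, Q (v j.castSucc.succ,
          (Fin.cons b' w : Fin (t + 1) → β) j.castSucc) (v j.succ.succ, w j) =
        Q (v 0, b) (v 1, b') * ∏ j : Fin t, P (v j.castSucc.succ) (v j.succ.succ) := by
      intro b'
      by_cases hb' : I (v 1) b'
      · have ih := sum_prod_cons_eq_prod_of_sum_snd_eq Q P I hsum hzero (fun i => v i.succ) b' hb'
        simp only [Fin.cons_succ] at ih
        rw [ih]
      · rw [hzero _ _ _ hb', zero_mul, zero_mul]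
    rw [← (Fin.consEquiv fun _ => β).sum_comp, Fintype.sum_prod_type, Fin.prod_univ_succ]
    simp only [Fin.consEquiv, Equiv.coe_fn_mk, Fin.prod_univ_succ, ← Fin.succ_castSucc,
      Fin.castSucc_zero, Fin.cons_zero, Fin.cons_succ, Fin.succ_zero_eq_one, ← Finset.mul_sum,
      htail, ← Finset.sum_mul, hsum _ _ _ hb]

end PathMarginal

section DiaconisFill

variable (G : SimpleGraph V) [DecidableRel G.Adj]

lemma walkP_nonneg (x y : V) : 0 ≤ walkP G x y := by
  unfold walkP
  split_ifs <;> positivity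

lemma walkP_pos_symm {y y' : V} (h : walkP G y y' ≠ 0) : 0 < walkP G y' y := by
  rcases eq_or_ne y y' with rfl | hne
  · simp [walkP]
  have hadj : G.Adj y y' := by
    by_contra hadj
    simp [walkP, hne, hadj] at h
  have : 0 < G.degree y' := G.degree_pos_iff_exists_adj y' |>.mpr ⟨y, hadj.symm⟩
  simp only [walkP, hne.symm, hadj.symm, if_false, if_true]
  positivity

lemma pset_pos_of_walkP_ne_zero {y y' : V} {S : Finset V} (hy : y ∈ S)
    (h : walkP G y y' ≠ 0) : 0 < pset G y' S :=
  (walkP_pos_symm G h).trans_le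
    (Finset.single_le_sum (fun z _ => walkP_nonneg G y' z) hy)

lemma Kk_nonneg (S S' : Finset V) : 0 ≤ Kk G S S' := ENNReal.toReal_nonneg

lemma volume_esStep_eq_ne_top (S S' : Finset V) :
    MeasureTheory.volume {u : ℝ | u ∈ Set.Icc (0:ℝ) 1 ∧ esStep G S u = S'} ≠ ⊤ :=
  ((MeasureTheory.measure_mono fun _ hu => hu.1).trans_lt (by simp)).ne

lemma exists_mem_Kk_pos {y : V} {S : Finset V} (hp : 0 < pset G y S) :
    ∃ S', y ∈ S' ∧ 0 < Kk G S S' := by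
  by_contra! hK
  have hnull : ∀ S' ∈ {S' : Finset V | y ∈ S'},
      MeasureTheory.volume {u : ℝ | u ∈ Set.Icc (0:ℝ) 1 ∧ esStep G S u = S'} = 0 := by
    intro S' hS'
    have hzero : Kk G S S' = 0 := (hK S' hS').antisymm (Kk_nonneg G S S')
    exact (ENNReal.toReal_eq_zero_iff _).mp hzero |>.resolve_right
      (volume_esStep_eq_ne_top G S S')
  have hcover : Set.Ioc 0 (min (pset G y S) 1) ⊆ ⋃ S' ∈ {S' : Finset V | y ∈ S'},
      {u : ℝ | u ∈ Set.Icc (0:ℝ) 1 ∧ esStep G S u = S'} := by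
    intro u hu
    refine Set.mem_biUnion (x := esStep G S u) ?_ ⟨⟨hu.1.le, hu.2.trans (min_le_right _ _)⟩, rfl⟩
    simpa [esStep] using hu.2.trans (min_le_left _ _)
  have hIoc := MeasureTheory.measure_mono_null hcover
    ((MeasureTheory.measure_biUnion_null_iff (Set.to_countable _)).mpr hnull)
  simp only [Real.volume_Ioc, sub_zero, ENNReal.ofReal_eq_zero, inf_le_iff] at hIoc
  linarith [hIoc.resolve_right (by norm_num)]

lemma sum_Kk_mem_pos {y : V} {S : Finset V} (hp : 0 < pset G y S) :
    0 < ∑ S' : Finset V, if y ∈ S' then Kk G S S' else 0 := by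
  obtain ⟨S', hyS', hK⟩ := exists_mem_Kk_pos G hp
  refine hK.trans_le ?_
  have := Finset.single_le_sum (f := fun S'' : Finset V => if y ∈ S'' then Kk G S S'' else 0)
    (fun S'' _ => by split_ifs <;> simp [Kk_nonneg]) (Finset.mem_univ S')
  simpa [hyS'] using this

lemma Kstar_eq_zero_of_notMem (p : V × Finset V) {y' : V} {S' : Finset V} (h : y' ∉ S') :
    Kstar G p (y', S') = 0 := by
  simp [Kstar, h]

lemma sum_Kstar_snd {y : V} {S : Finset V} (hy : y ∈ S) (y' : V) :
    ∑ S' : Finset V, Kstar G (y, S) (y', S') = walkP G y y' := by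
  by_cases hw : walkP G y y' = 0
  · simp [Kstar, hw]
  set Z := ∑ S'' : Finset V, if y' ∈ S'' then Kk G S S'' else 0
  have hZ : Z ≠ 0 := (sum_Kk_mem_pos G (pset_pos_of_walkP_ne_zero G hy hw)).ne'
  have hnorm : ∑ S' : Finset V, (if y' ∈ S' then Kk G S S' / Z else 0) = 1 := by
    rw [← div_self hZ, Finset.sum_div]
    refine Finset.sum_congr rfl fun S' _ => ?_
    split_ifs <;> simp
  simp only [Kstar, ← Finset.mul_sum]
  exact (congrArg _ hnorm).trans (mul_one _)

end DiaconisFill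

/-- Diaconis–Fill coupling, part 1: for the coupling Markov chain `(X_t, S_t)` started
from `(x, {x})`, the marginal sequence `(X_t)` is a Markov chain started from `x` with
the lazy random walk kernel: for every vertex path `(x = v 0, …, v t)`, summing the
joint path probabilities over all set paths gives the random walk path probability. -/
theorem statement4 (G : SimpleGraph V) [DecidableRel G.Adj] (x : V)
    (t : ℕ) (v : Fin (t+1) → V) (hv : v 0 = x) :
    (∑ w : Fin (t+1) → Finset V,
      if w 0 = {x} then
        ∏ j : Fin t, Kstar G (v j.castSucc, w j.castSucc) (v j.succ, w j.succ)
      else 0) =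
    ∏ j : Fin t, walkP G (v j.castSucc) (v j.succ) := by
  rw [sum_ite_apply_zero_eq_sum_cons]
  exact sum_prod_cons_eq_prod_of_sum_snd_eq (Kstar G) (walkP G) (fun y S => y ∈ S)
    (fun _ _ _ hy => sum_Kstar_snd G hy _) (fun p _ _ h => Kstar_eq_zero_of_notMem G p h)
    v {x} (by simp [hv])
end
end

section
/- Let G=(V,E) be a finite simple undirected graph and let (S_t) be the volume-biased evolving set process started from a nonempty set S₀ ⊆ V. Define F_t = Π_{j=0}^{t-1} (1 − ψ(S_j))^{-1} (with F₀ = 1) and M_t = F_t · √(μ(S₀)/μ(S_t)). Then (M_t)_{t≥0} is a martingale with respect to the natural filtration of the volume-biased evolving set process. -/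
/-!
Under the volume-biased kernel `K̂(S,S') = (μ(S')/μ(S)) K(S,S')` one has
`Ê_S[√(μ(S)/μ(S₁))] = E_S[√(μ(S₁)/μ(S))] = 1 - ψ(S)`, so the factor `(1 - ψ(S_t))⁻¹` entering
`F_{t+1}` exactly compensates the expected change of `√(μ(S₀)/μ(S_t))` in one step.
The factor is finite because with probability at least `1/2 - c > 0` the threshold `U` falls
in an interval `(c, 1/2]` on which `S₁` is constant and contains `S`, so `1 - ψ(S) > 0`
whenever `μ(S) > 0`.
-/

open scoped Classical symmDiff

noncomputable section

variable {V : Type*} [Fintype V] [DecidableEq V]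

/-- The growth gauge `ψ(S)`, defined by `1 - ψ(S) = E_S[√(μ(S₁)/μ(S))]` where the
expectation is over one step of the evolving set process from `S`. -/
def psi (G : SimpleGraph V) [DecidableRel G.Adj] (S : Finset V) : ℝ :=
  1 - ∑ S' : Finset V, Kk G S S' * Real.sqrt (vol G S' / vol G S)

/-- `F_t = Π_{j=0}^{t-1} (1 − ψ(S_j))⁻¹` along the path `s`. -/
def Fgauge (G : SimpleGraph V) [DecidableRel G.Adj] (s : ℕ → Finset V) (t : ℕ) : ℝ :=
  ∏ j ∈ Finset.range t, (1 - psi G (s j))⁻¹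

/-- `M_t = F_t · √(μ(S₀)/μ(S_t))` along the path `s` (here `s 0 = S₀`). -/
def Mgauge (G : SimpleGraph V) [DecidableRel G.Adj] (s : ℕ → Finset V) (t : ℕ) : ℝ :=
  Fgauge G s t * Real.sqrt (vol G (s 0) / vol G (s t))

section

variable (G : SimpleGraph V) [DecidableRel G.Adj]

omit [DecidableEq V] in
lemma vol_nonneg (S : Finset V) : 0 ≤ vol G S :=
  Finset.sum_nonneg fun _ _ => Nat.cast_nonneg _

omit [DecidableEq V] in
lemma vol_mono {S T : Finset V} (h : S ⊆ T) : vol G S ≤ vol G T :=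
  Finset.sum_le_sum_of_subset_of_nonneg h fun _ _ _ => Nat.cast_nonneg _

lemma half_le_pset_of_mem {x : V} {S : Finset V} (hx : x ∈ S) : (2⁻¹ : ℝ) ≤ pset G x S := by
  calc (2⁻¹ : ℝ) = walkP G x x := by simp [walkP]
    _ ≤ pset G x S := Finset.single_le_sum (fun y _ => walkP_nonneg G x y) hx

lemma subset_esStep_half (S : Finset V) : S ⊆ esStep G S 2⁻¹ := fun _ hx => by
  simpa [esStep] using half_le_pset_of_mem G hx

/-- Take for `c` the largest value `p(y,S) < b`, or `0`. -/
lemma exists_esStep_eq_on_Ioc (S : Finset V) {b : ℝ} (hb : 0 < b) :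
    ∃ c, 0 ≤ c ∧ c < b ∧ ∀ u ∈ Set.Ioc c b, esStep G S u = esStep G S b := by
  set P := insert 0 ((Finset.univ.image fun y => pset G y S).filter (· < b))
  have hP : P.Nonempty := Finset.insert_nonempty _ _
  refine ⟨P.max' hP, P.le_max' 0 (Finset.mem_insert_self _ _), ?_, ?_⟩
  · refine (P.max'_lt_iff hP).2 fun p hp => ?_
    rcases Finset.mem_insert.1 hp with rfl | hp
    · exact hb
    · exact (Finset.mem_filter.1 hp).2
  · rintro u ⟨hcu, hub⟩
    ext y
    simp only [esStep, Finset.mem_filter, Finset.mem_univ, true_and]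
    refine ⟨fun hu => not_lt.1 fun hy => ?_, hub.trans⟩
    have hyP : pset G y S ∈ P :=
      Finset.mem_insert_of_mem (Finset.mem_filter.2 ⟨Finset.mem_image_of_mem _ (by simp), hy⟩)
    exact (hcu.trans_le hu).not_ge (P.le_max' _ hyP)

lemma Kk_esStep_pos (S : Finset V) {b : ℝ} (hb₀ : 0 < b) (hb₁ : b ≤ 1) :
    0 < Kk G S (esStep G S b) := by
  obtain ⟨c, hc₀, hcb, hconst⟩ := exists_esStep_eq_on_Ioc G S hb₀
  have hIoc : Set.Ioc c b ⊆ {u | u ∈ Set.Icc (0 : ℝ) 1 ∧ esStep G S u = esStep G S b} :=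
    fun u hu => ⟨⟨hc₀.trans hu.1.le, hu.2.trans hb₁⟩, hconst u hu⟩
  refine ENNReal.toReal_pos (ne_of_gt ?_) ?_
  · calc (0 : ENNReal) < MeasureTheory.volume (Set.Ioc c b) := by simpa using hcb
      _ ≤ _ := MeasureTheory.measure_mono hIoc
  · refine ne_top_of_le_ne_top ?_ (MeasureTheory.measure_mono fun u hu => hu.1)
    simp

lemma one_sub_psi_eq (S : Finset V) :
    1 - psi G S = ∑ S' : Finset V, Kk G S S' * √(vol G S' / vol G S) :=
  sub_sub_cancel _ _

lemma one_sub_psi_pos {S : Finset V} (hS : 0 < vol G S) : 0 < 1 - psi G S := by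
  set T := esStep G S 2⁻¹
  have hT : 0 < √(vol G T / vol G S) :=
    Real.sqrt_pos.2 (div_pos (hS.trans_le (vol_mono G (subset_esStep_half G S))) hS)
  rw [one_sub_psi_eq]
  calc 0 < Kk G S T * √(vol G T / vol G S) :=
        mul_pos (Kk_esStep_pos G S (by norm_num) (by norm_num)) hT
    _ ≤ _ := Finset.single_le_sum (f := fun S' => Kk G S S' * √(vol G S' / vol G S))
        (fun S' _ => mul_nonneg (Kk_nonneg G S S') (Real.sqrt_nonneg _)) (Finset.mem_univ T)

omit [Fintype V] [DecidableEq V] in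
lemma div_mul_sqrt_div {a b : ℝ} (ha : 0 ≤ a) (hb : 0 ≤ b) (v : ℝ) :
    a / b * √(v / a) = √(a / b) * √(v / b) := by
  have hab : 0 ≤ a / b := div_nonneg ha hb
  rw [← Real.sqrt_mul hab, ← Real.sqrt_sq hab, ← Real.sqrt_mul (sq_nonneg _), Real.sqrt_sq hab]
  congr 1
  rcases eq_or_ne a 0 with rfl | ha'
  · simp
  · field_simp

lemma sum_Khat_mul_sqrt_div (S : Finset V) (v : ℝ) :
    ∑ S' : Finset V, Khat G S S' * √(v / vol G S') = (1 - psi G S) * √(v / vol G S) := by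
  rw [one_sub_psi_eq, Finset.sum_mul]
  refine Finset.sum_congr rfl fun S' _ => ?_
  rw [Khat, mul_right_comm, div_mul_sqrt_div (vol_nonneg G S') (vol_nonneg G S)]
  ring

lemma sum_Khat_mul_inv_one_sub_psi (S : Finset V) (c v : ℝ) :
    ∑ S' : Finset V, Khat G S S' * (c * (1 - psi G S)⁻¹ * √(v / vol G S')) =
      c * √(v / vol G S) := by
  simp_rw [mul_left_comm (Khat G S _), ← Finset.mul_sum, sum_Khat_mul_sqrt_div]
  rcases (vol_nonneg G S).eq_or_lt with hS | hS
  · -- `μ(S) = 0`: both sides vanish, as `x / 0 = 0`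
    simp [← hS]
  · field_simp [(one_sub_psi_pos G hS).ne']

lemma Fgauge_succ (s : ℕ → Finset V) (t : ℕ) :
    Fgauge G s (t + 1) = Fgauge G s t * (1 - psi G (s t))⁻¹ :=
  Finset.prod_range_succ _ _

lemma Fgauge_congr {s s' : ℕ → Finset V} {t : ℕ} (h : ∀ j < t, s j = s' j) :
    Fgauge G s t = Fgauge G s' t :=
  Finset.prod_congr rfl fun j hj => by rw [h j (Finset.mem_range.1 hj)]

lemma Mgauge_update_succ (s : ℕ → Finset V) (t : ℕ) (S' : Finset V) :
    Mgauge G (Function.update s (t + 1) S') (t + 1) =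
      Fgauge G s t * (1 - psi G (s t))⁻¹ * √(vol G (s 0) / vol G S') := by
  have hagree : ∀ j < t + 1, Function.update s (t + 1) S' j = s j :=
    fun j hj => Function.update_of_ne hj.ne _ _
  rw [Mgauge, Fgauge_congr G hagree, Fgauge_succ, hagree 0 t.succ_pos, Function.update_self]

end

theorem statement7_general (G : SimpleGraph V) [DecidableRel G.Adj]
    (S₀ : Finset V) :
    ∀ (t : ℕ) (s : ℕ → Finset V), s 0 = S₀ →
      0 < ∏ j ∈ Finset.range t, Khat G (s j) (s (j+1)) →
      ∑ S' : Finset V, Khat G (s t) S' * Mgauge G (Function.update s (t+1) S') (t+1) =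
        Mgauge G s t := by
  intro t s _ _
  simp_rw [Mgauge_update_succ]
  exact sum_Khat_mul_inv_one_sub_psi G (s t) (Fgauge G s t) (vol G (s 0))

/-- `(M_t)` with `M_t = F_t √(μ(S₀)/μ(S_t))`, `F_t = Π_{j<t} (1 − ψ(S_j))⁻¹`, is a
martingale for the volume-biased evolving set process started from a nonempty `S₀`,
with respect to the natural filtration: conditioned on any history `(s 0, …, s t)` of
positive probability starting at `S₀`, the expected value of `M_{t+1}` equals `M_t`. -/
theorem statement7 (G : SimpleGraph V) [DecidableRel G.Adj]
    (S₀ : Finset V) (hS₀ : S₀.Nonempty) :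
    ∀ (t : ℕ) (s : ℕ → Finset V), s 0 = S₀ →
      0 < ∏ j ∈ Finset.range t, Khat G (s j) (s (j+1)) →
      ∑ S' : Finset V, Khat G (s t) S' * Mgauge G (Function.update s (t+1) S') (t+1) =
        Mgauge G s t :=
  statement7_general G S₀

end
end
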